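/- Suppose all entries of π, of each π^{(t)}, and of each φ^{(t)} are nonnegative, and let r̃ be the Viterbi quantities. Let û : Fin T → Fin k be any path obtained by backtracking: û(T−1) maximizes v ↦ r̃(T−1, v), and for t = T−2 down to 0, û(t) maximizes u ↦ r̃(t, u) · π^{(t+1)}(u, û(t+1)). Then the weight of the backtracked path attains the maximum over all latent paths: w(û) = max_{ū : Fin T → Fin k} w(ū). -/

import Mathlib

/-!
Latent Markov model with `k ≥ 1` latent states, `l ≥ 1` response categories and
`T + 1 ≥ 1` time occasions (occasions are indexed by `0, …, T`, so that the last
occasion, written `T − 1` in the paper for `T` occasions, is here `T`).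
-/

/-- Extension of a partial latent path `ub : {0,…,t} → Fin k` to all of `ℕ`;
for `s ≤ t` it returns `ub s`. -/
def extPath {k t : ℕ} (u : Fin (t + 1) → Fin k) (s : ℕ) : Fin k :=
  u ⟨min s t, Nat.lt_succ_of_le (min_le_right s t)⟩

/-- The partial weight of a latent path up to occasion `t`.
For `t = T` (the last occasion) this is the full weight `w(ub)`. -/
noncomputable def pweight {k l : ℕ} (π : Fin k → ℝ) (P : ℕ → Fin k → Fin k → ℝ)
    (Φ : ℕ → Fin l → Fin k → ℝ) (y : ℕ → Fin l) (t : ℕ) (u : ℕ → Fin k) : ℝ :=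
  π (u 0) * (∏ s ∈ Finset.Icc 1 t, P s (u (s - 1)) (u s)) *
    ∏ s ∈ Finset.range (t + 1), Φ s (y s) (u s)

/-!
The Viterbi quantity `r t v` is the largest partial weight up to occasion `t` of a path
ending in `v`: every path has partial weight at most `r t (u t)` (nonnegativity of
transitions and response probabilities lets the bound pass through the recursion),
while along a backtracked path each maximum in the recursion is attained, so its partial
weight equals `r t (û t)`. At `t = T` the backtracked path therefore beats every path `ū`,
since `w(ū) ≤ r T (ū T) ≤ r T (û T) = w(û)`.
-/

open Finset

lemma pweight_succ {k l : ℕ} (π : Fin k → ℝ) (P : ℕ → Fin k → Fin k → ℝ)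
    (Φ : ℕ → Fin l → Fin k → ℝ) (y : ℕ → Fin l) (t : ℕ) (u : ℕ → Fin k) :
    pweight π P Φ y (t + 1) u =
      pweight π P Φ y t u * P (t + 1) (u t) (u (t + 1)) * Φ (t + 1) (y (t + 1)) (u (t + 1)) := by
  unfold pweight
  rw [prod_Icc_succ_top (by omega : 1 ≤ t + 1), prod_range_succ, Nat.add_sub_cancel]
  ring

section Viterbi

variable {k l T : ℕ} {π : Fin k → ℝ} {P : ℕ → Fin k → Fin k → ℝ} {Φ : ℕ → Fin l → Fin k → ℝ}
  {y : ℕ → Fin l} {r : ℕ → Fin k → ℝ} (hne : (univ : Finset (Fin k)).Nonempty)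
  (hr0 : ∀ u, r 0 u = π u * Φ 0 (y 0) u)
  (hrec : ∀ t < T, ∀ v,
    r (t + 1) v = Φ (t + 1) (y (t + 1)) v * univ.sup' hne (fun u => r t u * P (t + 1) u v))
include hr0 hrec

lemma pweight_le_viterbi (hP : ∀ t, 1 ≤ t → t ≤ T → ∀ u v, 0 ≤ P t u v)
    (hΦ : ∀ t ≤ T, ∀ yv u, 0 ≤ Φ t yv u) (u : ℕ → Fin k) :
    ∀ t ≤ T, pweight π P Φ y t u ≤ r t (u t) := by
  intro t
  induction t with
  | zero => intro _; simp [pweight, hr0]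
  | succ t ih =>
    intro ht
    have hP' : 0 ≤ P (t + 1) (u t) (u (t + 1)) := hP _ (by omega) ht _ _
    have hΦ' : 0 ≤ Φ (t + 1) (y (t + 1)) (u (t + 1)) := hΦ _ ht _ _
    have hsup : r t (u t) * P (t + 1) (u t) (u (t + 1)) ≤
        univ.sup' hne (fun w => r t w * P (t + 1) w (u (t + 1))) :=
      le_sup' (fun w => r t w * P (t + 1) w (u (t + 1))) (mem_univ (u t))
    calc pweight π P Φ y (t + 1) u
        = pweight π P Φ y t u * P (t + 1) (u t) (u (t + 1)) * Φ (t + 1) (y (t + 1)) (u (t + 1)) :=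
          pweight_succ π P Φ y t u
      _ ≤ r t (u t) * P (t + 1) (u t) (u (t + 1)) * Φ (t + 1) (y (t + 1)) (u (t + 1)) := by
          gcongr
          exact ih (by omega)
      _ ≤ univ.sup' hne (fun w => r t w * P (t + 1) w (u (t + 1))) *
            Φ (t + 1) (y (t + 1)) (u (t + 1)) := by gcongr
      _ = r (t + 1) (u (t + 1)) := by rw [hrec t ht, mul_comm]

lemma pweight_eq_viterbi_of_backtrack {u : ℕ → Fin k}
    (hback : ∀ t < T, ∀ v,
      r t v * P (t + 1) v (u (t + 1)) ≤ r t (u t) * P (t + 1) (u t) (u (t + 1))) :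
    ∀ t ≤ T, pweight π P Φ y t u = r t (u t) := by
  intro t
  induction t with
  | zero => intro _; simp [pweight, hr0]
  | succ t ih =>
    intro ht
    have hattained : univ.sup' hne (fun v => r t v * P (t + 1) v (u (t + 1))) =
        r t (u t) * P (t + 1) (u t) (u (t + 1)) :=
      le_antisymm (sup'_le _ _ fun v _ => hback t ht v)
        (le_sup' (fun v => r t v * P (t + 1) v (u (t + 1))) (mem_univ (u t)))
    rw [pweight_succ, hrec t ht, hattained, ih (by omega)]
    ring

end Viterbi

theorem viterbi_backtracking_attains_max_general
    (k l T : ℕ) (hk : 1 ≤ k)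
    (π : Fin k → ℝ) (P : ℕ → Fin k → Fin k → ℝ) (Φ : ℕ → Fin l → Fin k → ℝ)
    (hP : ∀ t, 1 ≤ t → t ≤ T → ∀ u v, 0 ≤ P t u v)
    (hΦ : ∀ t ≤ T, ∀ yv u, 0 ≤ Φ t yv u)
    (y : ℕ → Fin l) (r : ℕ → Fin k → ℝ)
    (hr0 : ∀ u, r 0 u = π u * Φ 0 (y 0) u)
    (hrrec : ∀ t, 1 ≤ t → t ≤ T → ∀ v,
      r t v = Φ t (y t) v *
        Finset.univ.sup' ⟨⟨0, hk⟩, Finset.mem_univ _⟩ (fun u => r (t - 1) u * P t u v))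
    (uh : Fin (T + 1) → Fin k)
    (hlast : ∀ v, r T v ≤ r T (extPath uh T))
    (hback : ∀ t < T, ∀ u,
      r t u * P (t + 1) u (extPath uh (t + 1)) ≤
        r t (extPath uh t) * P (t + 1) (extPath uh t) (extPath uh (t + 1))) :
    pweight π P Φ y T (extPath uh) =
      Finset.univ.sup' ⟨fun _ => ⟨0, hk⟩, Finset.mem_univ _⟩
        (fun ub : Fin (T + 1) → Fin k => pweight π P Φ y T (extPath ub)) := by
  have hrec : ∀ t < T, ∀ v, r (t + 1) v = Φ (t + 1) (y (t + 1)) v *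
      univ.sup' ⟨⟨0, hk⟩, mem_univ _⟩ (fun u => r t u * P (t + 1) u v) :=
    fun t ht v => hrrec (t + 1) (by omega) ht v
  have hbacktracked := pweight_eq_viterbi_of_backtrack _ hr0 hrec hback T le_rfl
  refine le_antisymm (le_sup' (fun ub => pweight π P Φ y T (extPath ub)) (mem_univ uh))
    (sup'_le _ _ fun ub _ => ?_)
  calc pweight π P Φ y T (extPath ub)
      ≤ r T (extPath ub T) := pweight_le_viterbi _ hr0 hrec hP hΦ _ T le_rfl
    _ ≤ r T (extPath uh T) := hlast _
    _ = pweight π P Φ y T (extPath uh) := hbacktracked.symm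

/-- Correctness of the Viterbi backtracking: any path `û` obtained by
backtracking from the Viterbi quantities (`û T` maximizes `v ↦ r̃(T,v)` and, going
backwards, `û t` maximizes `u ↦ r̃(t,u)·π⁽ᵗ⁺¹⁾(u, û (t+1))`) attains the maximal weight
over all latent paths. -/
theorem viterbi_backtracking_attains_max
    (k l T : ℕ) (hk : 1 ≤ k) (hl : 1 ≤ l)
    (π : Fin k → ℝ) (P : ℕ → Fin k → Fin k → ℝ) (Φ : ℕ → Fin l → Fin k → ℝ)
    (hπ : ∀ u, 0 ≤ π u)
    (hP : ∀ t, 1 ≤ t → t ≤ T → ∀ u v, 0 ≤ P t u v)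
    (hΦ : ∀ t ≤ T, ∀ yv u, 0 ≤ Φ t yv u)
    (y : ℕ → Fin l) (r : ℕ → Fin k → ℝ)
    (hr0 : ∀ u, r 0 u = π u * Φ 0 (y 0) u)
    (hrrec : ∀ t, 1 ≤ t → t ≤ T → ∀ v,
      r t v = Φ t (y t) v *
        Finset.univ.sup' ⟨⟨0, hk⟩, Finset.mem_univ _⟩ (fun u => r (t - 1) u * P t u v))
    (uh : Fin (T + 1) → Fin k)
    (hlast : ∀ v, r T v ≤ r T (extPath uh T))
    (hback : ∀ t < T, ∀ u,
      r t u * P (t + 1) u (extPath uh (t + 1)) ≤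
        r t (extPath uh t) * P (t + 1) (extPath uh t) (extPath uh (t + 1))) :
    pweight π P Φ y T (extPath uh) =
      Finset.univ.sup' ⟨fun _ => ⟨0, hk⟩, Finset.mem_univ _⟩
        (fun ub : Fin (T + 1) → Fin k => pweight π P Φ y T (extPath ub)) :=
  viterbi_backtracking_attains_max_general k l T hk π P Φ hP hΦ y r hr0 hrrec uh hlast hback
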